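/- arXiv:1401.0499 — 2 statements merged into one kernel-verified Lean document; each statement's English description precedes it below -/
import Mathlib

section
/- Let G be a finitely generated group such that there is a uniform bound on the cardinalities of the finite normal subgroups of G. Let 𝔇 be a set of left-invariant pseudo-metrics on G such that: (a) for every d ∈ 𝔇 and every r ≥ 0, the ball {g ∈ G : d(1,g) ≤ r} meets only finitely many classes of the equivalence relation x ∼_d y ⟺ d(x,y) = 0; (b) 𝔇 is quotient-closed: whenever Γ is a normal subgroup of G and φ : G → G/Γ is a group isomorphism, for every d ∈ 𝔇 the pseudo-metric (g,g′) ↦ d̄(φ(g), φ(g′)) belongs to 𝔇, where d̄(gΓ, g′Γ) := inf{d(gγ, g′γ′) : γ, γ′ ∈ Γ}; (c) there is d₀ ∈ 𝔇 with δ_{G,d₀} ≤ δ_{G,d} for all d ∈ 𝔇; and (d) G is growth tight with respect to d₀: for every infinite normal subgroup Γ of G, δ_{G/Γ,d̄₀} < δ_{G,d₀}. Then G is Hopfian: every surjective group homomorphism G → G is injective. -/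
open Filter
open scoped ENNReal

/-- `d` is a pseudo-metric on `α`. -/
structure IsPseudoMetric {α : Type*} (d : α → α → ℝ) : Prop where
  refl : ∀ x, d x x = 0
  symm : ∀ x y, d x y = d y x
  triangle : ∀ x y z, d x z ≤ d x y + d y z

/-- Growth exponent of a pseudo-metric `d` on a pointed set: the exponential growth rate of
the number of null-distance equivalence classes (encoded as the sets `{y | d x y = 0}`)
meeting the ball of radius `r` about the basepoint. -/
noncomputable def pmGrowth {α : Type*} (s₀ : α) (d : α → α → ℝ) : ℝ≥0∞ :=
  Filter.limsup (fun r : ℝ =>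
    ENNReal.ofReal
      (Real.log (Nat.card ((fun x => {y : α | d x y = 0}) '' {x : α | d s₀ x ≤ r})) / r))
    Filter.atTop

/-- The pseudo-metric induced on the quotient `G ⧸ Γ`:
`d̄(gΓ, g'Γ) = inf {d(gγ, g'γ') : γ, γ' ∈ Γ}`. -/
noncomputable def quotPseudoMetric {G : Type*} [Group G] (Γ : Subgroup G) (d : G → G → ℝ) :
    G ⧸ Γ → G ⧸ Γ → ℝ :=
  fun q q' =>
    sInf {x : ℝ | ∃ a b : G, QuotientGroup.mk a = q ∧ QuotientGroup.mk b = q' ∧ x = d a b}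

lemma pm_card_eq {α β : Type*} (e : α ≃ β) (s₀ : α) (d : β → β → ℝ) (r : ℝ) :
    Nat.card ((fun x => {y : α | d (e x) (e y) = 0}) '' {x : α | d (e s₀) (e x) ≤ r})
      = Nat.card ((fun q => {p : β | d q p = 0}) '' {q : β | d (e s₀) q ≤ r}) := by
  have hinj : Function.Injective (Set.image e) := Set.image_injective.mpr e.injective
  have h1 : ∀ x : α, e '' {y : α | d (e x) (e y) = 0} = {p : β | d (e x) p = 0} := by
    intro x
    ext p
    constructor
    · rintro ⟨y, hy, rfl⟩; exact hy
    · intro hp; exact ⟨e.symm p, by simpa using hp, e.apply_symm_apply p⟩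
  have hsets : (fun x : α => e '' {y : α | d (e x) (e y) = 0}) '' {x : α | d (e s₀) (e x) ≤ r}
      = (fun q : β => {p : β | d q p = 0}) '' {q : β | d (e s₀) q ≤ r} := by
    calc (fun x : α => e '' {y : α | d (e x) (e y) = 0}) '' {x : α | d (e s₀) (e x) ≤ r}
        = (fun x : α => {p : β | d (e x) p = 0}) '' {x : α | d (e s₀) (e x) ≤ r} :=
          Set.image_congr fun x _ => h1 x
      _ = (fun q : β => {p : β | d q p = 0}) '' (e '' {x : α | d (e s₀) (e x) ≤ r}) := by
          rw [Set.image_image]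
      _ = (fun q : β => {p : β | d q p = 0}) '' {q : β | d (e s₀) q ≤ r} := by
          rw [show {x : α | d (e s₀) (e x) ≤ r} = e ⁻¹' {q : β | d (e s₀) q ≤ r} from rfl,
            Set.image_preimage_eq _ e.surjective]
  rw [show Nat.card ((fun x => {y : α | d (e x) (e y) = 0}) '' {x : α | d (e s₀) (e x) ≤ r})
      = Nat.card (Set.image e ''
          ((fun x => {y : α | d (e x) (e y) = 0}) '' {x : α | d (e s₀) (e x) ≤ r}))
    from (Nat.card_image_of_injective hinj _).symm, Set.image_image, hsets]

lemma pmGrowth_comp_equiv {α β : Type*} (e : α ≃ β) (s₀ : α) (d : β → β → ℝ) :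
    pmGrowth s₀ (fun x y => d (e x) (e y)) = pmGrowth (e s₀) d := by
  unfold pmGrowth
  congr 1
  funext r
  rw [pm_card_eq e s₀ d r]

/-- **Proposition (Hopf property).** Let `G` be finitely generated with a uniform bound on
the cardinalities of its finite normal subgroups. If a quotient-closed set `𝔇` of
left-invariant pseudo-metrics on `G` (with locally finite balls) contains a minimal-growth
element `d₀` with respect to which `G` is growth tight, then `G` is Hopfian. -/
theorem hopf_of_growth_tight_minimal_metric
    {G : Type*} [Group G] (hFG : Group.FG G)
    (hbound : ∃ n : ℕ, ∀ Γ : Subgroup G, Γ.Normal → (Γ : Set G).Finite → Nat.card Γ ≤ n)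
    (𝔇 : Set (G → G → ℝ))
    (hpm : ∀ d ∈ 𝔇, IsPseudoMetric d ∧ ∀ k g g' : G, d (k * g) (k * g') = d g g')
    (hballs : ∀ d ∈ 𝔇, ∀ r : ℝ, 0 ≤ r →
      ((fun x => {y : G | d x y = 0}) '' {x : G | d 1 x ≤ r}).Finite)
    (hquotclosed : ∀ (Γ : Subgroup G) [Γ.Normal], ∀ φ : G ≃* G ⧸ Γ, ∀ d ∈ 𝔇,
      (fun g g' : G => quotPseudoMetric Γ d (φ g) (φ g')) ∈ 𝔇)
    (d₀ : G → G → ℝ) (hd₀ : d₀ ∈ 𝔇)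
    (hmin : ∀ d ∈ 𝔇, pmGrowth (1 : G) d₀ ≤ pmGrowth (1 : G) d)
    (hgt : ∀ (Γ : Subgroup G) [Γ.Normal], (Γ : Set G).Infinite →
      pmGrowth (1 : G ⧸ Γ) (quotPseudoMetric Γ d₀) < pmGrowth (1 : G) d₀) :
    ∀ f : G →* G, Function.Surjective f → Function.Injective f := by
  -- Step 1: every surjective endomorphism has finite kernel.
  have kerfin : ∀ g : G →* G, Function.Surjective g → ((g.ker : Subgroup G) : Set G).Finite := by
    intro g hg
    by_contra hinf
    have hinf' : ((g.ker : Subgroup G) : Set G).Infinite := hinf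
    haveI : g.ker.Normal := g.normal_ker
    set φ : G ≃* G ⧸ g.ker := (QuotientGroup.quotientKerEquivOfSurjective g hg).symm with hφ
    have hd₁ := hquotclosed g.ker φ d₀ hd₀
    have heq : pmGrowth (1 : G) (fun x y : G => quotPseudoMetric g.ker d₀ (φ x) (φ y))
        = pmGrowth (1 : G ⧸ g.ker) (quotPseudoMetric g.ker d₀) := by
      have h := pmGrowth_comp_equiv φ.toEquiv 1 (quotPseudoMetric g.ker d₀)
      rw [show φ.toEquiv (1 : G) = (1 : G ⧸ g.ker) from map_one φ] at h
      exact h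
    have h1 := hmin _ hd₁
    rw [heq] at h1
    exact absurd (lt_of_le_of_lt h1 (hgt g.ker hinf')) (lt_irrefl _)
  -- Step 2: the Hopf property.
  intro f hf
  by_contra hni
  -- there is a nontrivial kernel element
  have hker : f.ker ≠ ⊥ := by
    intro hbot
    exact hni ((MonoidHom.ker_eq_bot_iff f).mp hbot)
  obtain ⟨⟨x₀, hx₀mem⟩, hx₀ne'⟩ := Subgroup.ne_bot_iff_exists_ne_one.mp hker
  have hx₀ne : x₀ ≠ 1 := fun h => hx₀ne' (Subtype.ext h)
  -- iterates
  set F : ℕ → G →* G := fun n => (show Monoid.End G from f) ^ n with hF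
  have hFcoe : ∀ n, ⇑(F n) = f^[n] := fun n => rfl
  have hFsurj : ∀ n, Function.Surjective (F n) := by
    intro n; rw [hFcoe]; exact Function.Surjective.iterate hf n
  have hFfin : ∀ n, (((F n).ker : Subgroup G) : Set G).Finite := fun n => kerfin (F n) (hFsurj n)
  haveI : ∀ n, (F n).ker.Normal := fun n => (F n).normal_ker
  have hmem : ∀ n x, x ∈ (F n).ker ↔ f^[n] x = 1 := by
    intro n x
    rw [MonoidHom.mem_ker, show (F n) x = f^[n] x from congrFun (hFcoe n) x]
  -- strictly increasing chain of kernels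
  have hchain : ∀ n, ((F n).ker : Set G) ⊂ ((F (n+1)).ker : Set G) := by
    intro n
    constructor
    · intro x hx
      have hx' : f^[n] x = 1 := (hmem n x).mp hx
      have : f^[n+1] x = 1 := by
        rw [Function.iterate_succ_apply', hx', map_one]
      exact (hmem (n+1) x).mpr this
    · intro hsub
      obtain ⟨y, hy⟩ := hFsurj n x₀
      have hy1 : f^[n+1] y = 1 := by
        rw [Function.iterate_succ_apply', show f^[n] y = x₀ from by rw [← hFcoe n]; exact hy]
        exact hx₀mem
      have hy2 : y ∈ ((F (n+1)).ker : Set G) := (hmem (n+1) y).mpr hy1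
      have hy3 : y ∈ ((F n).ker : Set G) := hsub hy2
      have : f^[n] y = 1 := (hmem n y).mp hy3
      apply hx₀ne
      rw [← hFcoe n] at this
      rw [← hy, this]
  -- cardinalities grow without bound
  have hcard : ∀ n, n < ((F n).ker : Set G).ncard := by
    intro n
    induction n with
    | zero =>
      have : (1 : G) ∈ ((F 0).ker : Set G) := (hmem 0 1).mpr rfl
      exact Set.ncard_pos (hFfin 0) |>.mpr ⟨1, this⟩
    | succ n ih =>
      have := Set.ncard_lt_ncard (hchain n) (hFfin (n+1))
      omega
  obtain ⟨N, hN⟩ := hbound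
  have hle : Nat.card ((F N).ker) ≤ N := hN (F N).ker (F N).normal_ker (hFfin N)
  have hc : Nat.card ((F N).ker) = ((F N).ker : Set G).ncard := Nat.card_coe_set_eq _
  have hcN := hcard N
  omega
end

section
/- Let X be a metric space, A ⊆ X nonempty, and π a C-coarse map from X to A with diam({a} ∪ π(a)) ≤ C for all a ∈ A. Let M ≥ 1 and let 𝒫 be a collection of (M,C)-quasi-geodesics q : [0,T_q] → X such that every pair of points of X occurs as the pair of endpoints (q(0), q(T_q)) of some q ∈ 𝒫, and suppose π is constricting along 𝒫: for every q ∈ 𝒫, if d^π(q(0), q(T_q)) > C then d(π(q(0)), im q) ≤ C and d(π(q(T_q)), im q) ≤ C. Then π is (M², max{C, 4C/M²})-contracting. -/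
open Metric

section Defs

variable {X : Type*} [MetricSpace X]

/-- A geodesic parameterized on the interval `[0, T]`. -/
def IsGeodesicOn (γ : ℝ → X) (T : ℝ) : Prop :=
  ∀ s ∈ Set.Icc (0 : ℝ) T, ∀ t ∈ Set.Icc (0 : ℝ) T, dist (γ s) (γ t) = |s - t|

/-- A geodesic metric space. -/
def GeodesicSpace (X : Type*) [MetricSpace X] : Prop :=
  ∀ x y : X, ∃ γ : ℝ → X, γ 0 = x ∧ γ (dist x y) = y ∧ IsGeodesicOn γ (dist x y)

/-- Distance between two subsets of a metric space. -/
noncomputable def setDist (S T : Set X) : ℝ := sInf (Set.image2 dist S T)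

/-- A `C`-coarse map from `X` to `A`: each point is assigned a nonempty subset of `A`
of diameter at most `C`. -/
def IsCoarseMapTo (A : Set X) (C : ℝ) (π : X → Set X) : Prop :=
  ∀ x : X, (π x).Nonempty ∧ π x ⊆ A ∧ Metric.diam (π x) ≤ C

/-- `π` coarsely agrees with the identity on `A`: `diam ({a} ∪ π a) ≤ C` for all `a ∈ A`. -/
def CoarselyIdOn (A : Set X) (C : ℝ) (π : X → Set X) : Prop :=
  ∀ a ∈ A, Metric.diam ({a} ∪ π a) ≤ C

/-- `π` is `(M, C)`-contracting. -/
def ContractingMap (A : Set X) (M C : ℝ) (π : X → Set X) : Prop :=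
  CoarselyIdOn A C π ∧
  ∀ x y : X, dist x y < (1 / M) * Metric.infDist x A - C →
    Metric.diam (π x ∪ π y) ≤ C

/-- `π` is `C`-strongly contracting: it is `(1, C)`-contracting and coarsely agrees with
nearest-point projection. -/
def StronglyContractingMap (A : Set X) (C : ℝ) (π : X → Set X) : Prop :=
  ContractingMap A 1 C π ∧
  ∀ x : X, Metric.infDist x (π x) - Metric.infDist x A ≤ C

/-- `π` is `C`-strongly constricting: it coarsely agrees with the identity on `A`, and every
geodesic whose endpoints have `π`-images of diameter more than `C` passes `C`-close to the
`π`-images of both endpoints. -/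
def StronglyConstrictingMap (A : Set X) (C : ℝ) (π : X → Set X) : Prop :=
  CoarselyIdOn A C π ∧
  ∀ (T : ℝ) (γ : ℝ → X), 0 ≤ T → IsGeodesicOn γ T →
    C < Metric.diam (π (γ 0) ∪ π (γ T)) →
    setDist (π (γ 0)) (γ '' Set.Icc 0 T) ≤ C ∧ setDist (π (γ T)) (γ '' Set.Icc 0 T) ≤ C

/-- `π` has the `C`-Bounded Geodesic Image Property: geodesics staying outside the open
`C`-neighborhood of `A` have `π`-image of diameter at most `C`. -/
def BGIP (A : Set X) (C : ℝ) (π : X → Set X) : Prop :=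
  ∀ (T : ℝ) (γ : ℝ → X), 0 ≤ T → IsGeodesicOn γ T →
    (∀ t ∈ Set.Icc (0 : ℝ) T, C ≤ Metric.infDist (γ t) A) →
    Metric.diam (⋃ t ∈ Set.Icc (0 : ℝ) T, π (γ t)) ≤ C

/-- An `(M, C)`-quasi-geodesic parameterized on `[a, b]`. -/
def IsQuasiGeodesicOnIcc (M C : ℝ) (q : ℝ → X) (a b : ℝ) : Prop :=
  ∀ s ∈ Set.Icc a b, ∀ t ∈ Set.Icc a b,
    (1 / M) * |s - t| - C ≤ dist (q s) (q t) ∧ dist (q s) (q t) ≤ M * |s - t| + C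

end Defs

lemma arith_aux (m D d K C : ℝ) (hm : 1 ≤ m) (hC : 0 ≤ C) (hd : 0 ≤ d)
    (hKC : C ≤ K) (hKM : 4 * C ≤ K * m)
    (h1 : 2 * D ≤ (m + 1) * d + (m + 4) * C) (h2 : m * d < D - m * K) : False := by
  have hm0 : 0 < m := by linarith
  have hDpos : m * K < D := by nlinarith
  nlinarith [mul_le_mul_of_nonneg_left h1 hm0.le,
    mul_lt_mul_of_pos_left h2 (by linarith : (0:ℝ) < m + 1),
    mul_le_mul_of_nonneg_left hDpos.le (by linarith : (0:ℝ) ≤ m - 1),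
    mul_le_mul_of_nonneg_left hKC (mul_pos hm0 hm0).le,
    mul_le_mul_of_nonneg_left hKM hm0.le]

/-- **Lemma.** If `π` is constricting along a path system `𝒫` of `(M, C)`-quasi-geodesics
joining every pair of points, then `π` is `(M², max {C, 4C/M²})`-contracting. -/
theorem contracting_of_constricting_along_path_system
    {X : Type*} [MetricSpace X]
    (A : Set X) (hA : A.Nonempty)
    (C : ℝ) (hC : 0 ≤ C) (π : X → Set X) (hπ : IsCoarseMapTo A C π)
    (hid : CoarselyIdOn A C π)
    (M : ℝ) (hM : 1 ≤ M)
    (Ps : Set (ℝ × (ℝ → X)))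
    (hqg : ∀ p ∈ Ps, 0 ≤ p.1 ∧ IsQuasiGeodesicOnIcc M C p.2 0 p.1)
    (hsurj : ∀ x y : X, ∃ p ∈ Ps, p.2 0 = x ∧ p.2 p.1 = y)
    (hconstrict : ∀ p ∈ Ps,
      C < Metric.diam (π (p.2 0) ∪ π (p.2 p.1)) →
      setDist (π (p.2 0)) (p.2 '' Set.Icc 0 p.1) ≤ C ∧
      setDist (π (p.2 p.1)) (p.2 '' Set.Icc 0 p.1) ≤ C) :
    ContractingMap A (M ^ 2) (max C (4 * C / M ^ 2)) π := by

  have hM0 : (0:ℝ) < M := lt_of_lt_of_le one_pos hM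
  have hM2 : (0:ℝ) < M ^ 2 := by positivity
  constructor
  · intro a ha
    exact (hid a ha).trans (le_max_left _ _)
  · intro x y hxy
    by_contra hcon
    push_neg at hcon
    set K := max C (4 * C / M ^ 2) with hKdef
    set D := Metric.infDist x A with hDdef
    have hKC : C ≤ K := le_max_left _ _
    have hKM : 4 * C / M ^ 2 ≤ K := le_max_right _ _
    have hKM' : 4 * C ≤ K * M ^ 2 := (div_le_iff₀ hM2).mp hKM
    have hd0 : 0 ≤ dist x y := dist_nonneg
    obtain ⟨p, hp, h0, hT⟩ := hsurj x y
    obtain ⟨hT0, hq⟩ := hqg p hp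
    set T := p.1 with hTdef
    set q := p.2 with hqdef
    have h0mem : (0:ℝ) ∈ Set.Icc (0:ℝ) T := ⟨le_refl _, hT0⟩
    have hTmem : T ∈ Set.Icc (0:ℝ) T := ⟨hT0, le_refl _⟩
    have hdiam : C < Metric.diam (π (q 0) ∪ π (q T)) := by
      rw [h0, hT]; exact lt_of_le_of_lt hKC hcon
    obtain ⟨hc1, -⟩ := hconstrict p hp hdiam
    rw [← hqdef, ← hTdef, h0] at hc1
    -- bound T in terms of dist x y
    have hl := (hq 0 h0mem T hTmem).1
    have habsT : |(0:ℝ) - T| = T := by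
      rw [abs_sub_comm, sub_zero, abs_of_nonneg hT0]
    rw [habsT, h0, hT] at hl
    have hTle : T ≤ M * (dist x y + C) := by
      have h2 : (1/M) * T ≤ dist x y + C := by linarith
      rw [one_div, inv_mul_eq_div] at h2
      have := (div_le_iff₀ hM0).mp h2
      linarith [mul_comm (dist x y + C) M]
    have key : ∀ ε > (0:ℝ), 2 * D ≤ (M ^ 2 + 1) * dist x y + (M ^ 2 + 4) * C + ε := by
      intro ε hε
      obtain ⟨a0, ha0⟩ := (hπ x).1
      have him : q 0 ∈ q '' Set.Icc 0 T := ⟨0, h0mem, rfl⟩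
      have hne : (Set.image2 dist (π x) (q '' Set.Icc 0 T)).Nonempty :=
        ⟨dist a0 (q 0), Set.mem_image2_of_mem ha0 him⟩
      have hlt : sInf (Set.image2 dist (π x) (q '' Set.Icc 0 T)) < C + ε/2 := by
        refine lt_of_le_of_lt hc1 ?_
        linarith
      obtain ⟨v, hv, hvlt⟩ := exists_lt_of_csInf_lt hne hlt
      rw [Set.mem_image2] at hv
      obtain ⟨a, ha, w, hw, rfl⟩ := hv
      obtain ⟨t, ht, rfl⟩ := hw
      have haA : a ∈ A := (hπ x).2.1 ha
      have hxa : D ≤ dist x a := Metric.infDist_le_dist_of_mem haA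
      have hya : Metric.infDist y A ≤ dist y a := Metric.infDist_le_dist_of_mem haA
      have hDy : D ≤ Metric.infDist y A + dist x y := Metric.infDist_le_infDist_add_dist
      -- distances from x, y to q t
      have hx1 : D - (C + ε/2) ≤ dist x (q t) := by
        have htri := dist_triangle x (q t) a
        rw [dist_comm (q t) a] at htri
        linarith
      have hy1 : D - dist x y - (C + ε/2) ≤ dist y (q t) := by
        have htri := dist_triangle y (q t) a
        rw [dist_comm (q t) a] at htri
        linarith
      -- quasi-geodesic upper bounds
      have hu1 := (hq 0 h0mem t ht).2
      have habst : |(0:ℝ) - t| = t := by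
        rw [abs_sub_comm, sub_zero, abs_of_nonneg ht.1]
      rw [habst, h0] at hu1
      have hu2 := (hq t ht T hTmem).2
      have habst2 : |t - T| = T - t := by
        rw [abs_sub_comm]; exact abs_of_nonneg (by linarith [ht.2])
      rw [habst2, hT] at hu2
      rw [dist_comm (q t) y] at hu2
      have hsum : dist x (q t) + dist y (q t) ≤ M * T + 2 * C := by
        have : M * t + M * (T - t) = M * T := by ring
        linarith
      have hMT : M * T ≤ M ^ 2 * (dist x y + C) := by
        have := mul_le_mul_of_nonneg_left hTle hM0.le
        nlinarith
      nlinarith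
    have key0 : 2 * D ≤ (M ^ 2 + 1) * dist x y + (M ^ 2 + 4) * C := by
      refine le_of_forall_pos_le_add ?_
      intro ε hε
      exact key ε hε
    -- final contradiction
    have hx2 : M ^ 2 * dist x y < D - M ^ 2 * K := by
      have h3 := mul_lt_mul_of_pos_left hxy hM2
      have h4 : M ^ 2 * (1 / M ^ 2 * D) = D := by field_simp
      rw [mul_sub, h4] at h3
      exact h3
    exact arith_aux (M ^ 2) D (dist x y) K C (one_le_pow₀ hM) hC hd0 hKC
      (by linarith) key0 hx2
end
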